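/- For any finite simple graph G and positive integers b and λ, the number of legal b-fold λ-colorings of G equals the number of legal proper (1-fold) λ-colorings of the blow-up graph G^b divided by (b!)^{|V(G)|}. -/

import Mathlib

/-- The `b`-fold blow-up of a graph `G`: each vertex is replaced by a clique of size `b`,
and each edge by a complete join. -/
def blowup {V : Type*} (G : SimpleGraph V) (b : ℕ) : SimpleGraph (V × Fin b) where
  Adj x y := (x.1 = y.1 ∧ x.2 ≠ y.2) ∨ G.Adj x.1 y.1
  symm := by
    constructor
    rintro ⟨u, i⟩ ⟨v, j⟩ (⟨rfl, h⟩ | h)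
    · exact Or.inl ⟨rfl, h.symm⟩
    · exact Or.inr h.symm
  loopless := by
    constructor
    rintro ⟨u, i⟩ (⟨-, h⟩ | h)
    · exact h rfl
    · exact G.irrefl h

/-- `f` is a legal `b`-fold `lam`-coloring of `G`. -/
def IsBFoldColoring {V : Type*} (G : SimpleGraph V) (b lam : ℕ)
    (f : V → Finset (Fin lam)) : Prop :=
  (∀ v, (f v).card = b) ∧ ∀ ⦃u v⦄, G.Adj u v → Disjoint (f u) (f v)

/-- The number of legal `b`-fold `lam`-colorings of `G`. -/
noncomputable def nBFold {V : Type*} (G : SimpleGraph V) (b lam : ℕ) : ℕ :=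
  Nat.card {f : V → Finset (Fin lam) // IsBFoldColoring G b lam f}

/-- The number of proper (1-fold) `lam`-colorings of `G`. -/
noncomputable def nProper {V : Type*} (G : SimpleGraph V) (lam : ℕ) : ℕ :=
  Nat.card (G.Coloring (Fin lam))

/-!
A proper coloring of the blow-up `G^b` restricts, on the clique `{v} × Fin b`, to an injection
`Fin b ↪ Fin λ`, i.e. to a `b`-set of colors together with an ordering of it; forgetting the
orderings gives a `b`-fold coloring of `G`, and every `b`-fold coloring arises from exactly
`(b!)^|V|` choices of orderings.
-/

open Finset

section EmbeddingsOnto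

variable {ι α : Type*} [Fintype ι]

noncomputable def embeddingOntoEquiv (s : Finset α) :
    {e : ι ↪ α // univ.map e = s} ≃ (ι ≃ s) where
  toFun := fun ⟨e, he⟩ =>
    Equiv.ofBijective (fun i => ⟨e i, he ▸ mem_map_of_mem e (mem_univ i)⟩)
      ⟨fun i j h => e.injective (congrArg Subtype.val h), fun ⟨x, hx⟩ => by
        obtain ⟨i, -, rfl⟩ := mem_map.1 (he ▸ hx)
        exact ⟨i, rfl⟩⟩
  invFun σ := ⟨σ.toEmbedding.trans (Function.Embedding.subtype _), by
    ext x
    simpa using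
      ⟨fun ⟨i, hi⟩ => hi ▸ (σ i).2, fun hx => ⟨σ.symm ⟨x, hx⟩, by simp⟩⟩⟩
  left_inv _ := rfl
  right_inv _ := Equiv.ext fun _ => rfl

theorem card_embeddingOnto (s : Finset α) (hs : s.card = Fintype.card ι) :
    Nat.card {e : ι ↪ α // univ.map e = s} = (Fintype.card ι).factorial := by
  classical
  rw [Nat.card_congr (embeddingOntoEquiv s), Nat.card_eq_fintype_card, Fintype.card_equiv]
  exact Fintype.equivOfCardEq (by simp [hs])

end EmbeddingsOnto

section Blowup

variable {V α : Type*} (G : SimpleGraph V) (b : ℕ)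

abbrev OrderedBFoldColoring (α : Type*) : Type _ :=
  {g : V → (Fin b ↪ α) //
    ∀ ⦃u v⦄, G.Adj u v → Disjoint (univ.map (g u)) (univ.map (g v))}

def blowupColoringEquiv : (blowup G b).Coloring α ≃ OrderedBFoldColoring G b α where
  toFun c := ⟨fun v => ⟨fun i => c (v, i), fun i j h => by_contra fun hij =>
      c.valid (show (blowup G b).Adj (v, i) (v, j) from .inl ⟨rfl, hij⟩) h⟩,
    fun u v huv => disjoint_left.2 <| by
      simp only [mem_map, mem_univ, true_and]
      rintro _ ⟨i, rfl⟩ ⟨j, hj⟩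
      exact c.valid (Or.inr huv) hj.symm⟩
  invFun g := .mk (fun x => g.1 x.1 x.2) <| by
    rintro ⟨u, i⟩ ⟨v, j⟩ (⟨rfl, hij⟩ | huv) hc
    · exact hij ((g.1 u).injective hc)
    · exact disjoint_left.1 (g.2 huv) (mem_map_of_mem _ (mem_univ i))
        (hc ▸ mem_map_of_mem _ (mem_univ j))
  left_inv _ := rfl
  right_inv _ := rfl

namespace OrderedBFoldColoring

variable (lam : ℕ)

def colorSets (g : OrderedBFoldColoring G b (Fin lam)) :
    {f : V → Finset (Fin lam) // IsBFoldColoring G b lam f} :=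
  ⟨fun v => univ.map (g.1 v), fun v => by simp, g.2⟩

def colorSetsFiberEquiv (f : {f : V → Finset (Fin lam) // IsBFoldColoring G b lam f}) :
    {g // colorSets G b lam g = f} ≃ ∀ v, {e : Fin b ↪ Fin lam // univ.map e = f.1 v} where
  toFun g v := ⟨g.1.1 v, congrFun (congrArg Subtype.val g.2) v⟩
  invFun e := ⟨⟨fun v => e v, fun u v huv => (e u).2 ▸ (e v).2 ▸ f.2.2 huv⟩,
    Subtype.ext (funext fun v => (e v).2)⟩
  left_inv _ := rfl
  right_inv _ := rfl

theorem card_colorSets_fiber [Fintype V]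
    (f : {f : V → Finset (Fin lam) // IsBFoldColoring G b lam f}) :
    Nat.card {g // colorSets G b lam g = f} = b.factorial ^ Fintype.card V := by
  have hcard v : (f.1 v).card = Fintype.card (Fin b) := (f.2.1 v).trans (Fintype.card_fin b).symm
  rw [Nat.card_congr (colorSetsFiberEquiv G b lam f), Nat.card_pi,
    prod_congr rfl fun v _ => card_embeddingOnto (f.1 v) (hcard v), prod_const, card_univ,
    Fintype.card_fin]

end OrderedBFoldColoring

theorem nProper_blowup_eq_nBFold_mul [Fintype V] (lam : ℕ) :
    nProper (blowup G b) lam = nBFold G b lam * b.factorial ^ Fintype.card V := by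
  classical
  rw [nProper, Nat.card_congr ((blowupColoringEquiv G b).trans
      (Equiv.sigmaFiberEquiv (OrderedBFoldColoring.colorSets G b lam)).symm), Nat.card_sigma,
    sum_congr rfl fun f _ => OrderedBFoldColoring.card_colorSets_fiber G b lam f, sum_const,
    card_univ, smul_eq_mul, nBFold, Nat.card_eq_fintype_card]

end Blowup

theorem nBFold_eq_nProper_blowup_div_general {V : Type*} [Fintype V] (G : SimpleGraph V) (b lam : ℕ) :
    nBFold G b lam = nProper (blowup G b) lam / (Nat.factorial b) ^ (Fintype.card V) := by
  rw [nProper_blowup_eq_nBFold_mul, Nat.mul_div_cancel _ (pow_pos b.factorial_pos _)]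

theorem nBFold_eq_nProper_blowup_div {V : Type*} [Fintype V] (G : SimpleGraph V) (b lam : ℕ)
    (hb : 0 < b) (hlam : 0 < lam) :
    nBFold G b lam = nProper (blowup G b) lam / (Nat.factorial b) ^ (Fintype.card V) :=
  nBFold_eq_nProper_blowup_div_general G b lam
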